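/- Let n ≥ 1, let βc, α, β, γ, δ, ε ∈ ℝ, and for c ∈ ℝ let U(c) be the 2×2 rotation matrix with rows (cos(c/2), −sin(c/2)) and (sin(c/2), cos(c/2)). Then for all φ, θ, c ∈ ℝ, the Bell operator satisfies B(φ + c, θ + c) = U(c)^{⊗n} · B(φ, θ) · (U(c)†)^{⊗n}. Consequently B(φ,θ) and B(φ+c, θ+c) have the same eigenvalues, i.e. the spectrum of B(φ,θ) depends only on φ − θ. -/
import Mathlib


noncomputable section

open scoped ComplexConjugate Matrix

/-- Operators on `n` qubits: `2ⁿ × 2ⁿ` complex matrices indexed by bitstrings. -/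
abbrev QOp (n : ℕ) := Matrix (Fin n → Fin 2) (Fin n → Fin 2) ℂ

/-- The single-qubit operator `M` acting on the `i`-th tensor factor and as the
identity on all the other factors. -/
def onQubit (n : ℕ) (i : Fin n) (M : Matrix (Fin 2) (Fin 2) ℂ) : QOp n :=
  Matrix.of fun f g =>
    M (f i) (g i) * ∏ j ∈ Finset.univ.erase i, (if f j = g j then (1 : ℂ) else 0)

/-- The collective operator `S_M = Σᵢ M⁽ⁱ⁾`. -/
def collS (n : ℕ) (M : Matrix (Fin 2) (Fin 2) ℂ) : QOp n := ∑ i : Fin n, onQubit n i M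

/-- The collective two-body operator `S_{MN} = Σ_{i≠j} M⁽ⁱ⁾ N⁽ʲ⁾`. -/
def collSS (n : ℕ) (M N : Matrix (Fin 2) (Fin 2) ℂ) : QOp n :=
  ∑ i : Fin n, ∑ j ∈ Finset.univ.erase i, onQubit n i M * onQubit n j N

def pauliX : Matrix (Fin 2) (Fin 2) ℂ := !![0, 1; 1, 0]
def pauliY : Matrix (Fin 2) (Fin 2) ℂ := !![0, -Complex.I; Complex.I, 0]
def pauliZ : Matrix (Fin 2) (Fin 2) ℂ := !![1, 0; 0, -1]

/-- The matrix element `⟨ψ| A |φ⟩`. -/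
def braket {n : ℕ} (ψ : (Fin n → Fin 2) → ℂ) (A : QOp n) (φ : (Fin n → Fin 2) → ℂ) : ℂ :=
  ∑ f : Fin n → Fin 2, ∑ g : Fin n → Fin 2, conj (ψ f) * A f g * φ g

/-- Kronecker delta `δ(a)` on the integers, valued in `ℂ`. -/
def kdel (a : ℤ) : ℂ := if a = 0 then 1 else 0

/-- The single-qubit observable `M(ang) = cos(ang)·σz + sin(ang)·σx`. -/
def measObs (ang : ℝ) : Matrix (Fin 2) (Fin 2) ℂ :=
  ((Real.cos ang : ℝ) : ℂ) • pauliZ + ((Real.sin ang : ℝ) : ℂ) • pauliX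

/-- The Bell operator `B(φ,θ) = bc·𝟙 + al·Σᵢ M₀⁽ⁱ⁾ + be·Σᵢ M₁⁽ⁱ⁾ + (ga/2)·Σ_{i≠j} M₀⁽ⁱ⁾M₀⁽ʲ⁾
 + de·Σ_{i≠j} M₀⁽ⁱ⁾M₁⁽ʲ⁾ + (ep/2)·Σ_{i≠j} M₁⁽ⁱ⁾M₁⁽ʲ⁾` with `M₀ = M(φ)` and `M₁ = M(θ)`. -/
def bellOp (n : ℕ) (bc al be ga de ep : ℝ) (φ θ : ℝ) : QOp n :=
  ((bc : ℝ) : ℂ) • (1 : QOp n) + ((al : ℝ) : ℂ) • collS n (measObs φ)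
    + ((be : ℝ) : ℂ) • collS n (measObs θ)
    + ((ga / 2 : ℝ) : ℂ) • collSS n (measObs φ) (measObs φ)
    + ((de : ℝ) : ℂ) • collSS n (measObs φ) (measObs θ)
    + ((ep / 2 : ℝ) : ℂ) • collSS n (measObs θ) (measObs θ)

/-- The `n`-fold tensor (Kronecker) power of a `2×2` matrix. -/
def tensorPow (n : ℕ) (U : Matrix (Fin 2) (Fin 2) ℂ) : QOp n :=
  Matrix.of fun f g => ∏ i : Fin n, U (f i) (g i)

/-- The rotation `U(c)` with rows `(cos(c/2), −sin(c/2))` and `(sin(c/2), cos(c/2))`. -/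
def rotU (c : ℝ) : Matrix (Fin 2) (Fin 2) ℂ :=
  !![((Real.cos (c / 2) : ℝ) : ℂ), -((Real.sin (c / 2) : ℝ) : ℂ);
     ((Real.sin (c / 2) : ℝ) : ℂ), ((Real.cos (c / 2) : ℝ) : ℂ)]

/-! ### Auxiliary lemmas -/

lemma pyth (x : ℝ) : ((Real.sin x : ℝ) : ℂ)^2 + ((Real.cos x : ℝ) : ℂ)^2 = 1 := by
  have h := Real.sin_sq_add_cos_sq x
  rw [← Complex.ofReal_pow, ← Complex.ofReal_pow, ← Complex.ofReal_add, h, Complex.ofReal_one]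

lemma rotU_mul_conjTranspose (c : ℝ) : rotU c * (rotU c)ᴴ = 1 := by
  ext i j
  fin_cases i <;> fin_cases j <;>
    simp [rotU, Matrix.mul_apply, Fin.sum_univ_two, Matrix.one_apply,
      Matrix.conjTranspose_apply, Complex.conj_ofReal,
      -Complex.ofReal_cos, -Complex.ofReal_sin] <;>
    (first | ring1 | linear_combination pyth (c/2))

lemma conjTranspose_mul_rotU (c : ℝ) : (rotU c)ᴴ * rotU c = 1 := by
  ext i j
  fin_cases i <;> fin_cases j <;>
    simp [rotU, Matrix.mul_apply, Fin.sum_univ_two, Matrix.one_apply,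
      Matrix.conjTranspose_apply, Complex.conj_ofReal,
      -Complex.ofReal_cos, -Complex.ofReal_sin] <;>
    (first | ring1 | linear_combination pyth (c/2))

lemma rot_measObs (c φ : ℝ) : rotU c * measObs φ * (rotU c)ᴴ = measObs (φ + c) := by
  have hc : ((Real.cos (φ + c) : ℝ) : ℂ)
      = (Real.cos φ : ℂ) * ((Real.cos (c/2) : ℂ)^2 - (Real.sin (c/2) : ℂ)^2)
        - (Real.sin φ : ℂ) * (2 * (Real.sin (c/2) : ℂ) * (Real.cos (c/2) : ℂ)) := by
    have h2c := Real.cos_two_mul (c/2)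
    have h2s := Real.sin_two_mul (c/2)
    rw [show 2*(c/2) = c by ring] at h2c h2s
    have : Real.cos (φ + c) = Real.cos φ * (Real.cos (c/2)^2 - Real.sin (c/2)^2)
        - Real.sin φ * (2 * Real.sin (c/2) * Real.cos (c/2)) := by
      rw [Real.cos_add, h2c, h2s]; linear_combination Real.cos φ * Real.sin_sq_add_cos_sq (c/2)
    rw [this]; push_cast [-Complex.ofReal_cos, -Complex.ofReal_sin]; ring
  have hs : ((Real.sin (φ + c) : ℝ) : ℂ)
      = (Real.sin φ : ℂ) * ((Real.cos (c/2) : ℂ)^2 - (Real.sin (c/2) : ℂ)^2)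
        + (Real.cos φ : ℂ) * (2 * (Real.sin (c/2) : ℂ) * (Real.cos (c/2) : ℂ)) := by
    have h2c := Real.cos_two_mul (c/2)
    have h2s := Real.sin_two_mul (c/2)
    rw [show 2*(c/2) = c by ring] at h2c h2s
    have : Real.sin (φ + c) = Real.sin φ * (Real.cos (c/2)^2 - Real.sin (c/2)^2)
        + Real.cos φ * (2 * Real.sin (c/2) * Real.cos (c/2)) := by
      rw [Real.sin_add, h2c, h2s]; linear_combination Real.sin φ * Real.sin_sq_add_cos_sq (c/2)
    rw [this]; push_cast [-Complex.ofReal_cos, -Complex.ofReal_sin]; ring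
  ext i j
  fin_cases i <;> fin_cases j <;>
    simp [rotU, measObs, pauliX, pauliZ, Matrix.mul_apply, Fin.sum_univ_two,
      Matrix.conjTranspose_apply, Complex.conj_ofReal, hc, hs,
      -Complex.ofReal_cos, -Complex.ofReal_sin] <;>
    ring

/-- A tensor product of possibly different single-qubit matrices. -/
def tOf (n : ℕ) (Ms : Fin n → Matrix (Fin 2) (Fin 2) ℂ) : QOp n :=
  Matrix.of fun f g => ∏ j, Ms j (f j) (g j)

lemma tOf_mul (n : ℕ) (Ms Ns : Fin n → Matrix (Fin 2) (Fin 2) ℂ) :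
    tOf n Ms * tOf n Ns = tOf n (fun j => Ms j * Ns j) := by
  ext f g
  simp only [tOf, Matrix.mul_apply, Matrix.of_apply]
  rw [Finset.prod_univ_sum, Fintype.piFinset_univ]
  exact Finset.sum_congr rfl fun h _ => (Finset.prod_mul_distrib).symm

lemma tensorPow_eq (n : ℕ) (U : Matrix (Fin 2) (Fin 2) ℂ) :
    tensorPow n U = tOf n (fun _ => U) := rfl

lemma one_eq_tOf (n : ℕ) : (1 : QOp n) = tOf n (fun _ => 1) := by
  ext f g
  simp only [tOf, Matrix.of_apply, Matrix.one_apply]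
  by_cases h : f = g
  · subst h; simp
  · rw [if_neg h]
    obtain ⟨j, hj⟩ := Function.ne_iff.mp h
    exact (Finset.prod_eq_zero (Finset.mem_univ j) (by simp [Matrix.one_apply, hj])).symm

lemma onQubit_eq_tOf (n : ℕ) (i : Fin n) (M : Matrix (Fin 2) (Fin 2) ℂ) :
    onQubit n i M = tOf n (fun j => if j = i then M else 1) := by
  ext f g
  simp only [onQubit, tOf, Matrix.of_apply]
  rw [← Finset.mul_prod_erase _ _ (Finset.mem_univ i), if_pos rfl]
  congr 1
  refine Finset.prod_congr rfl fun j hj => ?_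
  rw [if_neg (Finset.ne_of_mem_erase hj), Matrix.one_apply]

lemma conj_onQubit (n : ℕ) (c : ℝ) (i : Fin n) (M : Matrix (Fin 2) (Fin 2) ℂ) :
    tensorPow n (rotU c) * onQubit n i M * tensorPow n ((rotU c)ᴴ)
      = onQubit n i (rotU c * M * (rotU c)ᴴ) := by
  rw [tensorPow_eq, tensorPow_eq, onQubit_eq_tOf, onQubit_eq_tOf, tOf_mul, tOf_mul]
  refine congrArg (tOf n) (funext fun j => ?_)
  by_cases h : j = i
  · simp [h]
  · simp [h, rotU_mul_conjTranspose]

lemma conj_pair (n : ℕ) (c : ℝ) (i j : Fin n) (M N : Matrix (Fin 2) (Fin 2) ℂ) :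
    tensorPow n (rotU c) * (onQubit n i M * onQubit n j N) * tensorPow n ((rotU c)ᴴ)
      = onQubit n i (rotU c * M * (rotU c)ᴴ) * onQubit n j (rotU c * N * (rotU c)ᴴ) := by
  have hR := rotU_mul_conjTranspose c
  have hRR := conjTranspose_mul_rotU c
  rw [tensorPow_eq, tensorPow_eq, onQubit_eq_tOf, onQubit_eq_tOf, onQubit_eq_tOf,
    onQubit_eq_tOf, tOf_mul, tOf_mul, tOf_mul, tOf_mul]
  refine congrArg (tOf n) (funext fun k => ?_)
  have key2 : ∀ A B : Matrix (Fin 2) (Fin 2) ℂ,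
      rotU c * (A * B) * (rotU c)ᴴ = (rotU c * A * (rotU c)ᴴ) * (rotU c * B * (rotU c)ᴴ) := by
    intro A B
    simp only [Matrix.mul_assoc]
    rw [← Matrix.mul_assoc ((rotU c)ᴴ) (rotU c), hRR, Matrix.one_mul]
  rw [key2]
  by_cases hi : k = i <;> by_cases hj : k = j <;> simp [hi, hj, hR]

lemma conj_collS (n : ℕ) (c : ℝ) (M : Matrix (Fin 2) (Fin 2) ℂ) :
    tensorPow n (rotU c) * collS n M * tensorPow n ((rotU c)ᴴ)
      = collS n (rotU c * M * (rotU c)ᴴ) := by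
  simp only [collS, Finset.mul_sum, Finset.sum_mul, conj_onQubit]

lemma conj_collSS (n : ℕ) (c : ℝ) (M N : Matrix (Fin 2) (Fin 2) ℂ) :
    tensorPow n (rotU c) * collSS n M N * tensorPow n ((rotU c)ᴴ)
      = collSS n (rotU c * M * (rotU c)ᴴ) (rotU c * N * (rotU c)ᴴ) := by
  simp only [collSS, Finset.mul_sum, Finset.sum_mul, conj_pair]

lemma tP_mul_tP (n : ℕ) (c : ℝ) :
    tensorPow n (rotU c) * tensorPow n ((rotU c)ᴴ) = 1 := by
  rw [tensorPow_eq, tensorPow_eq, tOf_mul, one_eq_tOf]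
  exact congrArg (tOf n) (funext fun _ => rotU_mul_conjTranspose c)

lemma tP_mul_tP' (n : ℕ) (c : ℝ) :
    tensorPow n ((rotU c)ᴴ) * tensorPow n (rotU c) = 1 := by
  rw [tensorPow_eq, tensorPow_eq, tOf_mul, one_eq_tOf]
  exact congrArg (tOf n) (funext fun _ => conjTranspose_mul_rotU c)

/-- Theorem: `B(φ+c, θ+c) = U(c)^{⊗n} B(φ,θ) (U(c)†)^{⊗n}`; consequently the spectrum of
the Bell operator depends only on `φ − θ`. -/
theorem stmt_11 (n : ℕ) (hn : 1 ≤ n) (bc al be ga de ep : ℝ) (φ θ c : ℝ) :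
    bellOp n bc al be ga de ep (φ + c) (θ + c)
      = tensorPow n (rotU c) * bellOp n bc al be ga de ep φ θ * tensorPow n ((rotU c)ᴴ)
    ∧ spectrum ℂ (bellOp n bc al be ga de ep (φ + c) (θ + c))
      = spectrum ℂ (bellOp n bc al be ga de ep φ θ) := by
  have hmain : tensorPow n (rotU c) * bellOp n bc al be ga de ep φ θ * tensorPow n ((rotU c)ᴴ)
      = bellOp n bc al be ga de ep (φ + c) (θ + c) := by
    simp only [bellOp, Matrix.mul_add, Matrix.add_mul, Matrix.mul_smul, Matrix.smul_mul,
      Matrix.mul_one, tP_mul_tP, conj_collS, conj_collSS, rot_measObs]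
  refine ⟨hmain.symm, ?_⟩
  rw [← hmain]
  let u : (QOp n)ˣ := ⟨tensorPow n (rotU c), tensorPow n ((rotU c)ᴴ), tP_mul_tP n c, tP_mul_tP' n c⟩
  exact spectrum.units_conjugate (u := u)
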